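/- Let A be a normed division algebra and let a, b, c ∈ Im A be purely imaginary elements. Then the commutator [a,b] = a*b − b*a lies in Im A, and the associator [a,b,c] = (a*b)*c − a*(b*c) lies in Im A. -/

import Mathlib

/-!
Polarizing the composition law `‖ab‖ = ‖a‖‖b‖` in both arguments gives
`⟪ab, cd⟫ + ⟪ad, cb⟫ = 2⟪a, c⟫⟪b, d⟫`. With `c = d = 1` this reads
`⟪xy, 1⟫ = -⟪x, y⟫` for imaginary `x`, `y`, which is symmetric in `x`, `y`, so `[a, b]` is
imaginary. Putting `1` in the other slots shows that left and right multiplication by an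
imaginary element are skew-adjoint; hence `⟪ab, c⟫ = ⟪a, bc⟫`, i.e. `(ab)c` and `a(bc)` have
the same component along `1`.
-/

open scoped RealInnerProductSpace

/-- A normed division algebra: a real inner product space with an `ℝ`-bilinear
multiplication (not necessarily associative or commutative), a two-sided
multiplicative identity `one ≠ 0`, satisfying `‖a*b‖ = ‖a‖ * ‖b‖`. -/
structure NormedDivisionAlgebra (A : Type*) [NormedAddCommGroup A] [InnerProductSpace ℝ A] where
  mul : A →ₗ[ℝ] A →ₗ[ℝ] A
  one : A
  one_ne_zero : one ≠ 0
  one_mul : ∀ a : A, mul one a = a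
  mul_one : ∀ a : A, mul a one = a
  norm_mul : ∀ a b : A, ‖mul a b‖ = ‖a‖ * ‖b‖

namespace NormedDivisionAlgebra

variable {A : Type*} [NormedAddCommGroup A] [InnerProductSpace ℝ A]

/-- `Re a`: the orthogonal projection of `a` onto the real part `Re A = ℝ · 1`. -/
noncomputable def re (D : NormedDivisionAlgebra A) (a : A) : A :=
  (⟪a, D.one⟫ / ‖D.one‖ ^ 2) • D.one

/-- `Im a`: the orthogonal projection of `a` onto the imaginary part `Im A = (ℝ · 1)ᗮ`. -/
noncomputable def im (D : NormedDivisionAlgebra A) (a : A) : A := a - D.re a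

/-- The conjugate `conj a = Re a - Im a`. -/
noncomputable def conj (D : NormedDivisionAlgebra A) (a : A) : A := D.re a - D.im a

/-- The real part `Re A = ℝ · 1` as a submodule. -/
def ReSub (D : NormedDivisionAlgebra A) : Submodule ℝ A := Submodule.span ℝ {D.one}

/-- The imaginary part `Im A = (ℝ · 1)ᗮ` as a submodule. -/
noncomputable def ImSub (D : NormedDivisionAlgebra A) : Submodule ℝ A := (Submodule.span ℝ {D.one})ᗮ

/-- The commutator `[a, b] = a*b - b*a`. -/
def comm (D : NormedDivisionAlgebra A) (a b : A) : A := D.mul a b - D.mul b a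

/-- The associator `[a, b, c] = (a*b)*c - a*(b*c)`. -/
def assoc (D : NormedDivisionAlgebra A) (a b c : A) : A :=
  D.mul (D.mul a b) c - D.mul a (D.mul b c)

/-- The cross product `a × b = Im (a*b)` (intended for `a, b ∈ Im A`). -/
noncomputable def cross (D : NormedDivisionAlgebra A) (a b : A) : A := D.im (D.mul a b)

end NormedDivisionAlgebra

namespace NormedDivisionAlgebra

variable {A : Type*} [NormedAddCommGroup A] [InnerProductSpace ℝ A] (D : NormedDivisionAlgebra A)

theorem mem_imSub_iff {x : A} : x ∈ D.ImSub ↔ ⟪x, D.one⟫ = 0 :=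
  Submodule.mem_orthogonal_singleton_iff_inner_left

theorem inner_mul_mul_right (a b c : A) :
    ⟪D.mul a c, D.mul b c⟫ = ⟪a, b⟫ * ‖c‖ ^ 2 := by
  have hsq : ∀ x : A, ⟪D.mul x c, D.mul x c⟫ = ⟪x, x⟫ * ‖c‖ ^ 2 := fun x => by
    rw [real_inner_self_eq_norm_sq, real_inner_self_eq_norm_sq, D.norm_mul, mul_pow]
  have hab := hsq (a + b)
  simp only [map_add, LinearMap.add_apply, inner_add_left, inner_add_right] at hab
  linear_combination (hab - hsq a - hsq b) / 2 + real_inner_comm (D.mul b c) (D.mul a c) / 2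
    - ‖c‖ ^ 2 / 2 * real_inner_comm b a

theorem inner_mul_mul_add_inner_mul_mul (a b c d : A) :
    ⟪D.mul a b, D.mul c d⟫ + ⟪D.mul a d, D.mul c b⟫ = 2 * ⟪a, c⟫ * ⟪b, d⟫ := by
  have hbd := D.inner_mul_mul_right a c (b + d)
  simp only [map_add, inner_add_left, inner_add_right] at hbd
  linear_combination hbd - D.inner_mul_mul_right a c b - D.inner_mul_mul_right a c d
    + ⟪a, c⟫ * norm_add_sq_real b d

theorem inner_mul_one (x y : A) :
    ⟪D.mul x y, D.one⟫ = 2 * ⟪x, D.one⟫ * ⟪y, D.one⟫ - ⟪x, y⟫ := by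
  have h := D.inner_mul_mul_add_inner_mul_mul x y D.one D.one
  rw [D.one_mul, D.mul_one, D.one_mul] at h
  linarith

theorem inner_mul_left_of_mem_imSub {a : A} (ha : a ∈ D.ImSub) (x y : A) :
    ⟪D.mul a x, y⟫ = -⟪x, D.mul a y⟫ := by
  have h := D.inner_mul_mul_add_inner_mul_mul D.one x a y
  rw [D.one_mul, D.one_mul, real_inner_comm a, (D.mem_imSub_iff).1 ha] at h
  linarith [real_inner_comm (D.mul a y) x, real_inner_comm y (D.mul a x)]

theorem inner_mul_right_of_mem_imSub {a : A} (ha : a ∈ D.ImSub) (x y : A) :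
    ⟪D.mul x a, y⟫ = -⟪x, D.mul y a⟫ := by
  have h := D.inner_mul_mul_add_inner_mul_mul x a y D.one
  rw [D.mul_one, D.mul_one, (D.mem_imSub_iff).1 ha] at h
  linarith

theorem inner_mul_left_eq_inner_mul_right {a c : A} (ha : a ∈ D.ImSub) (hc : c ∈ D.ImSub)
    (b : A) : ⟪D.mul a b, c⟫ = ⟪a, D.mul b c⟫ := by
  rw [D.inner_mul_left_of_mem_imSub ha, real_inner_comm (D.mul b c),
    D.inner_mul_right_of_mem_imSub hc]

theorem comm_mem_imSub {a b : A} (ha : a ∈ D.ImSub) (hb : b ∈ D.ImSub) :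
    D.comm a b ∈ D.ImSub := by
  rw [mem_imSub_iff] at ha hb ⊢
  rw [comm, inner_sub_left, inner_mul_one, inner_mul_one, ha, hb, real_inner_comm a]
  ring

theorem assoc_mem_imSub {a c : A} (ha : a ∈ D.ImSub) (hc : c ∈ D.ImSub) (b : A) :
    D.assoc a b c ∈ D.ImSub := by
  have hassoc := D.inner_mul_left_eq_inner_mul_right ha hc b
  rw [mem_imSub_iff] at ha hc ⊢
  rw [assoc, inner_sub_left, D.inner_mul_one (D.mul a b), D.inner_mul_one a (D.mul b c), ha, hc,
    hassoc]
  ring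

end NormedDivisionAlgebra

theorem nda_comm_assoc_imaginary {A : Type*} [NormedAddCommGroup A] [InnerProductSpace ℝ A]
    (D : NormedDivisionAlgebra A) (a b c : A)
    (ha : a ∈ D.ImSub) (hb : b ∈ D.ImSub) (hc : c ∈ D.ImSub) :
    D.comm a b ∈ D.ImSub ∧ D.assoc a b c ∈ D.ImSub :=
  ⟨D.comm_mem_imSub ha hb, D.assoc_mem_imSub ha hc b⟩
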